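/- In a cartesian category where all idempotents split and which has final AB-machines (i.e., for all A, B a final coalgebra for machines A × X → B × X exists), the endomorphism ⟨⟨π_out, π₁⟩⟩ on the final machine's state space — the anamorphism of the machine with the same output but identity state update — is idempotent, and its splitting yields an exponential object A ⇒ B making the category cartesian closed. -/

import Mathlib

/-!
The anamorphism `e` of the stateless machine `⟨υ_out, π₁⟩` preserves the output of `υ`, so it is
also an endomorphism of `⟨υ_out, π₁⟩`; then `e ≫ e` is a second homomorphism into the final
machine, whence `e ≫ e = e`. Given a splitting `e = q ≫ i`, evaluation is `ev = (A ◁ i) ≫ υ_out`.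
A map `g : A ⊗ X ⟶ B` is curried by `m ≫ q`, where `m` is the anamorphism of the stateless machine
`⟨g, π₁⟩`. Conversely, since `i ≫ e = i`, the section `i` is a homomorphism out of the stateless
machine `⟨ev, π₁⟩`; so for any `h` with `(A ◁ h) ≫ ev = g` the composite `h ≫ i` is a homomorphism
out of `⟨g, π₁⟩`, hence equals `m` by finality, and `h = m ≫ q`.
-/

open CategoryTheory MonoidalCategory CartesianMonoidalCategory

namespace CategoryTheory.Machine

variable {C : Type*} [Category C] [CartesianMonoidalCategory C] {A B X Y Z : C}

def IsHom (ξ : A ⊗ X ⟶ B ⊗ X) (η : A ⊗ Y ⟶ B ⊗ Y) (h : X ⟶ Y) : Prop :=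
  (A ◁ h) ≫ η = ξ ≫ (B ◁ h)

def IsFinal {T : C} (υ : A ⊗ T ⟶ B ⊗ T) : Prop :=
  ∀ (X : C) (ξ : A ⊗ X ⟶ B ⊗ X), ∃! f : X ⟶ T, IsHom ξ υ f

def stateless (g : A ⊗ X ⟶ B) : A ⊗ X ⟶ B ⊗ X :=
  lift g (snd A X)

@[simp]
lemma stateless_fst (g : A ⊗ X ⟶ B) : stateless g ≫ fst B X = g :=
  lift_fst _ _

lemma IsHom.comp {ξ : A ⊗ X ⟶ B ⊗ X} {η : A ⊗ Y ⟶ B ⊗ Y} {ζ : A ⊗ Z ⟶ B ⊗ Z}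
    {h : X ⟶ Y} {k : Y ⟶ Z} (hh : IsHom ξ η h) (hk : IsHom η ζ k) : IsHom ξ ζ (h ≫ k) := by
  unfold IsHom at *
  rw [whiskerLeft_comp, whiskerLeft_comp, Category.assoc, hk, ← Category.assoc, hh,
    Category.assoc]

lemma IsHom.whiskerLeft_comp_fst {ξ : A ⊗ X ⟶ B ⊗ X} {η : A ⊗ Y ⟶ B ⊗ Y} {h : X ⟶ Y}
    (hh : IsHom ξ η h) : (A ◁ h) ≫ η ≫ fst B Y = ξ ≫ fst B X := by
  rw [← Category.assoc, hh, Category.assoc, whiskerLeft_fst]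

lemma isHom_stateless (h : X ⟶ Y) (g : A ⊗ Y ⟶ B) :
    IsHom (stateless ((A ◁ h) ≫ g)) (stateless g) h := by
  unfold IsHom stateless
  apply hom_ext <;> simp

variable {T : C} {υ : A ⊗ T ⟶ B ⊗ T} {e : T ⟶ T}

lemma IsHom.whiskerLeft_comp_out (he : IsHom (stateless (υ ≫ fst B T)) υ e) :
    (A ◁ e) ≫ υ ≫ fst B T = υ ≫ fst B T := by
  rw [he.whiskerLeft_comp_fst, stateless_fst]

lemma IsHom.isHom_stateless_out (he : IsHom (stateless (υ ≫ fst B T)) υ e) :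
    IsHom (stateless (υ ≫ fst B T)) (stateless (υ ≫ fst B T)) e := by
  simpa only [he.whiskerLeft_comp_out] using isHom_stateless e (υ ≫ fst B T)

lemma IsHom.comp_self (hυ : IsFinal υ)
    (he : IsHom (stateless (υ ≫ fst B T)) υ e) : e ≫ e = e :=
  (hυ T _).unique (he.isHom_stateless_out.comp he) he

lemma existsUnique_curry (hυ : IsFinal υ)
    (he : IsHom (stateless (υ ≫ fst B T)) υ e) {E : C}
    {q : T ⟶ E} {i : E ⟶ T} (hiq : i ≫ q = 𝟙 E) (hqi : q ≫ i = e) (g : A ⊗ X ⟶ B) :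
    ∃! h : X ⟶ E, (A ◁ h) ≫ (A ◁ i) ≫ υ ≫ fst B T = g := by
  have hie : i ≫ e = i := by rw [← hqi, ← Category.assoc, hiq, Category.id_comp]
  have hi : IsHom (stateless ((A ◁ i) ≫ υ ≫ fst B T)) υ i := by
    simpa only [hie] using (isHom_stateless i _).comp he
  obtain ⟨m, hm, hm_unique⟩ := hυ X (stateless g)
  refine ⟨m ≫ q, ?_, fun h hh => ?_⟩
  · dsimp only
    rw [← Category.assoc, ← whiskerLeft_comp, Category.assoc, hqi, whiskerLeft_comp,
      Category.assoc, he.whiskerLeft_comp_out, hm.whiskerLeft_comp_fst, stateless_fst]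
  · have hhi : IsHom (stateless g) υ (h ≫ i) := hh ▸ (isHom_stateless h _).comp hi
    rw [← hm_unique _ hhi, Category.assoc, hiq, Category.comp_id]

end CategoryTheory.Machine

open CategoryTheory.Machine in
theorem stmt_18_general {C : Type*} [Category C] [CartesianMonoidalCategory C]
    (T : C → C → C) (υ : ∀ A B : C, A ⊗ T A B ⟶ B ⊗ T A B)
    (hfin : ∀ (A B X : C) (ξ : A ⊗ X ⟶ B ⊗ X),
      ∃! f : X ⟶ T A B, (A ◁ f) ≫ υ A B = ξ ≫ (B ◁ f)) :
    ∀ (A B : C) (e : T A B ⟶ T A B),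
      (A ◁ e) ≫ υ A B =
          lift (υ A B ≫ fst B (T A B)) (snd A (T A B)) ≫ (B ◁ e) →
      e ≫ e = e ∧
      ∀ (E : C) (q : T A B ⟶ E) (i : E ⟶ T A B), i ≫ q = 𝟙 E → q ≫ i = e →
        ∃ ev : A ⊗ E ⟶ B, ∀ (X : C) (g : A ⊗ X ⟶ B),
          ∃! h : X ⟶ E, (A ◁ h) ≫ ev = g := by
  intro A B e he
  exact ⟨IsHom.comp_self (hfin A B) he, fun E q i hiq hqi =>
    ⟨_, fun X g => existsUnique_curry (hfin A B) he hiq hqi g⟩⟩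

/-- In a cartesian category where idempotents split and final `AB`-machines exist for
all `A, B`, the anamorphism `e` of the machine with the same output as the final machine
but identity state update (characterized as the unique coalgebra homomorphism from
`⟨υ_out, π₁⟩` to `υ`) is idempotent, and splitting it yields an exponential object
`A ⇒ B`, making the category cartesian closed. -/
theorem stmt_18 {C : Type*} [Category C] [CartesianMonoidalCategory C]
    (T : C → C → C) (υ : ∀ A B : C, A ⊗ T A B ⟶ B ⊗ T A B)
    (hfin : ∀ (A B X : C) (ξ : A ⊗ X ⟶ B ⊗ X),
      ∃! f : X ⟶ T A B, (A ◁ f) ≫ υ A B = ξ ≫ (B ◁ f))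
    (hsplit : ∀ (X : C) (f : X ⟶ X), f ≫ f = f →
      ∃ (Y : C) (q : X ⟶ Y) (i : Y ⟶ X), i ≫ q = 𝟙 Y ∧ q ≫ i = f) :
    ∀ (A B : C) (e : T A B ⟶ T A B),
      (A ◁ e) ≫ υ A B =
          lift (υ A B ≫ fst B (T A B)) (snd A (T A B)) ≫ (B ◁ e) →
      e ≫ e = e ∧
      ∀ (E : C) (q : T A B ⟶ E) (i : E ⟶ T A B), i ≫ q = 𝟙 E → q ≫ i = e →
        ∃ ev : A ⊗ E ⟶ B, ∀ (X : C) (g : A ⊗ X ⟶ B),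
          ∃! h : X ⟶ E, (A ◁ h) ≫ ev = g :=
  stmt_18_general T υ hfin
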